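/- arXiv:1711.06871 — 8 statements merged into one kernel-verified Lean document; each statement's English description precedes it below -/
import Mathlib

section
/- In an anonymous hedonic game where each agent's preference over (task, coalition-size) pairs is single-peaked at one (SPAO), i.e., for each task, smaller coalitions are always weakly preferred, a Nash stable partition always exists. -/
/-- Number of agents assigned to task `j` under partition `π`. -/
def coalSize {A τ : Type*} [Fintype A] [DecidableEq τ] (π : A → τ) (j : τ) : ℕ :=
  (Finset.univ.filter fun k => π k = j).card

/-- Size of coalition `S_j ∪ {i}`. -/
def joinSize {A τ : Type*} [Fintype A] [DecidableEq τ] (π : A → τ) (i : A) (j : τ) : ℕ :=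
  if π i = j then coalSize π j else coalSize π j + 1

/-!
Agents are added one at a time to a Nash stable partition. The newcomer joins its favourite
coalition, which thereby grows by one. By SPAO only members of this grown coalition can now want
to leave; if one does, it moves to its own favourite coalition, which becomes the grown one.
A mover chose its coalition knowing it would be the grown one, so it never wants to move again,
and the process ends in a Nash stable partition.
-/

open Finset Function

lemma exists_forall_rel_of_total {β γ : Type*} [Finite γ] [Nonempty γ] {r : β → β → Prop}
    (htotal : ∀ x y, r x y ∨ r y x) (htrans : ∀ {x y z}, r x y → r y z → r x z) (f : γ → β) :
    ∃ a, ∀ b, r (f a) (f b) := by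
  classical
  have := Fintype.ofFinite γ
  -- an element that beats the largest number of elements beats all of them
  obtain ⟨a, ha⟩ := Finite.exists_max fun a => #{b | r (f a) (f b)}
  refine ⟨a, fun b => by_contra fun hab => (ha b).not_gt (card_lt_card ?_)⟩
  have hba : r (f b) (f a) := (htotal _ _).resolve_left hab
  refine ssubset_iff_of_subset (fun c hc => ?_) |>.mpr ⟨b, ?_, ?_⟩
  · simp only [mem_filter, mem_univ, true_and] at hc ⊢
    exact htrans hba hc
  · simpa using (htotal (f b) (f b)).elim id id
  · simpa using hab

namespace GRAPE

variable {A τ : Type*} [DecidableEq τ]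

structure IsSPAO (R : A → τ × ℕ → τ × ℕ → Prop) : Prop where
  total : ∀ i x y, R i x y ∨ R i y x
  trans : ∀ i {x y z}, R i x y → R i y z → R i x z
  rel_succ : ∀ i t p, R i (t, p) (t, p + 1)

def sizeOn (s : Finset A) (π : A → τ) (j : τ) : ℕ := #{k ∈ s | π k = j}

def IsNashStableOn (R : A → τ × ℕ → τ × ℕ → Prop) (s : Finset A) (π : A → τ) : Prop :=
  ∀ i ∈ s, ∀ j ≠ π i, R i (π i, sizeOn s π (π i)) (j, sizeOn s π j + 1)

section sizeOn

variable [DecidableEq A] {s : Finset A} {a : A}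

lemma sizeOn_insert (ha : a ∉ s) (π : A → τ) :
    sizeOn (insert a s) π = sizeOn s π + Pi.single (π a) 1 := by
  ext j
  by_cases h : π a = j
  · simp [sizeOn, filter_insert, h, ha]
  · simp [sizeOn, filter_insert, h, Ne.symm h]

lemma sizeOn_update_of_notMem (ha : a ∉ s) (π : A → τ) (t : τ) :
    sizeOn s (update π a t) = sizeOn s π := by
  ext j
  refine congrArg card (filter_congr fun k hk => ?_)
  rw [update_of_ne (ne_of_mem_of_not_mem hk ha)]

lemma sizeOn_insert_update (ha : a ∉ s) (π : A → τ) (t : τ) :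
    sizeOn (insert a s) (update π a t) = sizeOn s π + Pi.single t 1 := by
  rw [sizeOn_insert ha, sizeOn_update_of_notMem ha, update_self]

end sizeOn

variable {R : A → τ × ℕ → τ × ℕ → Prop}

/-- `n` are the coalition sizes of the Nash stable partition before the newcomer arrived, `c` is
the one coalition that has grown since, and `M` are the agents that have moved. -/
structure RepairInvariant (R : A → τ × ℕ → τ × ℕ → Prop) (s : Finset A) (n : τ → ℕ)
    (π : A → τ) (c : τ) (M : Finset A) : Prop where
  sizeOn_eq : sizeOn s π = n + Pi.single c 1
  rel_join : ∀ i ∈ s, ∀ t, R i (π i, n (π i)) (t, n t + 1)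
  rel_join_of_mem : ∀ i ∈ M, ∀ t, R i (π i, n (π i) + 1) (t, n t + 1)
  subset : M ⊆ s

namespace RepairInvariant

variable {s : Finset A} {n : τ → ℕ} {π : A → τ} {c : τ} {M : Finset A}

lemma rel_sizeOn (hR : IsSPAO R) (h : RepairInvariant R s n π c M) {i : A} (hi : i ∈ s)
    (hc : π i = c → ∀ t, R i (π i, n (π i) + 1) (t, n t + 1)) {j : τ} (hj : j ≠ π i) :
    R i (π i, sizeOn s π (π i)) (j, sizeOn s π j + 1) := by
  simp only [h.sizeOn_eq, Pi.add_apply, Pi.single_apply]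
  by_cases hjc : j = c
  · have hic : π i ≠ c := hjc ▸ hj.symm
    simp only [hjc, hic, if_true, if_false, add_zero]
    exact hR.trans i (h.rel_join i hi c) (hR.rel_succ i c _)
  · by_cases hic : π i = c
    · simpa [hjc, hic] using hc hic j
    · simpa [hjc, hic] using h.rel_join i hi j

lemma move [DecidableEq A] (hR : IsSPAO R) (h : RepairInvariant R s n π c M) {i : A}
    (hi : i ∈ s) (hic : π i = c) {b : τ} (hb : ∀ t, R i (b, n b + 1) (t, n t + 1)) :
    RepairInvariant R s n (update π i b) b (insert i M) where
  sizeOn_eq := by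
    have hsplit := sizeOn_insert (s := s.erase i) (notMem_erase i s) π
    rw [insert_erase hi, h.sizeOn_eq, hic] at hsplit
    rw [← insert_erase hi, sizeOn_insert_update (notMem_erase i s), add_right_cancel hsplit]
  rel_join k hk t := by
    by_cases hki : k = i
    · subst hki
      simpa using hR.trans k (hR.rel_succ k b _) (hb t)
    · simpa [hki] using h.rel_join k hk t
  rel_join_of_mem k hk t := by
    by_cases hki : k = i
    · subst hki
      simpa using hb t
    · simpa [hki] using h.rel_join_of_mem k ((mem_insert.mp hk).resolve_left hki) t
  subset := insert_subset hi h.subset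

lemma of_insert [DecidableEq A] (hR : IsSPAO R) {a : A} (ha : a ∉ s)
    (hπ : IsNashStableOn R s π) {b : τ}
    (hb : ∀ t, R a (b, sizeOn s π b + 1) (t, sizeOn s π t + 1)) :
    RepairInvariant R (insert a s) (sizeOn s π) (update π a b) b ∅ where
  sizeOn_eq := sizeOn_insert_update ha π b
  rel_join k hk t := by
    by_cases hka : k = a
    · subst hka
      simpa using hR.trans k (hR.rel_succ k b _) (hb t)
    · have hk : k ∈ s := (mem_insert.mp hk).resolve_left hka
      simp only [update_of_ne hka]
      by_cases ht : t = π k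
      · exact ht ▸ hR.rel_succ k t _
      · exact hπ k hk t ht
  rel_join_of_mem k hk := absurd hk (notMem_empty k)
  subset := empty_subset _

theorem exists_isNashStableOn [DecidableEq A] [Fintype τ] (hR : IsSPAO R) {s : Finset A}
    {n : τ → ℕ} {π : A → τ} {c : τ} {M : Finset A} (h : RepairInvariant R s n π c M) :
    ∃ π', IsNashStableOn R s π' := by
  by_cases hstable : IsNashStableOn R s π
  · exact ⟨π, hstable⟩
  obtain ⟨i, hi, j, hj, hdev⟩ : ∃ i ∈ s, ∃ j ≠ π i,
      ¬ R i (π i, sizeOn s π (π i)) (j, sizeOn s π j + 1) := by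
    simpa [IsNashStableOn] using hstable
  have hic : π i = c := by
    by_contra hic
    exact hdev (h.rel_sizeOn hR hi (absurd · hic) hj)
  have hiM : i ∉ M := fun hiM => hdev (h.rel_sizeOn hR hi (fun _ => h.rel_join_of_mem i hiM) hj)
  have : Nonempty τ := ⟨c⟩
  obtain ⟨b, hb⟩ := exists_forall_rel_of_total (hR.total i) (hR.trans i)
    fun t => (t, n t + 1)
  exact (h.move hR hi hic hb).exists_isNashStableOn hR
termination_by #s - #M
decreasing_by
  have := card_le_card (insert_subset hi h.subset)
  rw [card_insert_of_notMem hiM] at this ⊢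
  omega

end RepairInvariant

theorem exists_isNashStableOn [DecidableEq A] [Fintype τ] [Nonempty τ] (hR : IsSPAO R)
    (s : Finset A) : ∃ π, IsNashStableOn R s π := by
  induction s using Finset.induction with
  | empty => exact ⟨fun _ => Classical.arbitrary τ, by simp [IsNashStableOn]⟩
  | insert a s ha ih =>
    obtain ⟨π, hπ⟩ := ih
    obtain ⟨b, hb⟩ := exists_forall_rel_of_total (hR.total a) (hR.trans a)
      fun t => (t, sizeOn s π t + 1)
    exact (RepairInvariant.of_insert hR ha hπ hb).exists_isNashStableOn hR

end GRAPE

/-- In an anonymous hedonic game (GRAPE instance) with agents `A`, tasks `τ`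
(including the void task `tphi`, whose pairs are size-indifferent), where each agent's
preference `R i` is a total preorder over (task, coalition-size) pairs that is SPAO for every
non-void task (smaller coalitions weakly preferred), a Nash stable partition exists. -/
theorem nash_stable_exists
    {A τ : Type*} [Fintype A] [Fintype τ] [DecidableEq τ]
    (tphi : τ)
    (R : A → τ × ℕ → τ × ℕ → Prop)
    (htotal : ∀ i x y, R i x y ∨ R i y x)
    (htrans : ∀ i, Transitive (R i))
    (hvoid : ∀ (i : A) (p q : ℕ) (x : τ × ℕ),
      (R i (tphi, p) x ↔ R i (tphi, q) x) ∧ (R i x (tphi, p) ↔ R i x (tphi, q)))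
    (hSPAO : ∀ (i : A) (t : τ), t ≠ tphi → ∀ p1 p2 : ℕ, p1 < p2 → R i (t, p1) (t, p2)) :
    ∃ π : A → τ, ∀ (i : A) (j : τ),
      R i (π i, coalSize π (π i)) (j, joinSize π i j) := by
  classical
  have hrefl (i : A) (x : τ × ℕ) : R i x x := (htotal i x x).elim id id
  have hR : GRAPE.IsSPAO R := by
    refine ⟨htotal, htrans, fun i t p => ?_⟩
    by_cases ht : t = tphi
    · exact ht ▸ (hvoid i p (p + 1) (tphi, p)).2.mp (hrefl i _)
    · exact hSPAO i t ht p (p + 1) p.lt_succ_self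
  have : Nonempty τ := ⟨tphi⟩
  obtain ⟨π, hπ⟩ := GRAPE.exists_isNashStableOn hR Finset.univ
  refine ⟨π, fun i j => ?_⟩
  unfold joinSize
  split_ifs with hj
  · exact hj ▸ hrefl i _
  · exact hπ i (Finset.mem_univ i) j (Ne.symm hj)
end

section
/- In a SPAO GRAPE instance, if agent a_i deviates to a coalition S_j forming partition Π', and subsequently an agent a_q leaves S_j ∪ {a_i} to form partition Π'', then agent a_i still weakly prefers its current coalition in Π'' even if one more agent joins it; formally Δ_{Π''(i)} ≥ 1, so a_i will not deviate when a single new agent joins its coalition. -/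
/-- After agent `i` has deviated to a weakly most preferred coalition
(partition `π'`), if an agent `q` of `i`'s coalition subsequently leaves to a coalition
`j' ≠ π' i` (forming `π'' = update π' q j'`), then `i` still weakly prefers its current
coalition even with one more member, i.e. `Δ_{Π''(i)} ≥ 1`:  for every other coalition `j`,
`(t_{π'' i}, |S_{π'' i}| + 1) ⪰_i (t_j, |S_j ∪ {i}|)`. -/
theorem deviator_tolerates_one_more
    {A τ : Type*} [Fintype A] [DecidableEq A] [Fintype τ] [DecidableEq τ]
    (R : A → τ × ℕ → τ × ℕ → Prop)
    (htotal : ∀ i x y, R i x y ∨ R i y x)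
    (htrans : ∀ i, Transitive (R i))
    (hSPAO : ∀ (i : A) (t : τ) (p1 p2 : ℕ), p1 < p2 → R i (t, p1) (t, p2))
    (π' : A → τ) (i : A)
    (hbest : ∀ j : τ, R i (π' i, coalSize π' (π' i)) (j, joinSize π' i j))
    (q : A) (hq : q ≠ i) (hq_in : π' q = π' i)
    (j' : τ) (hj' : j' ≠ π' i)
    (π'' : A → τ) (hπ'' : π'' = Function.update π' q j') :
    ∀ j : τ, j ≠ π'' i →
      R i (π'' i, coalSize π'' (π'' i) + 1) (j, joinSize π'' i j) := by
  intro j hj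
  subst hπ''
  have hii : Function.update π' q j' i = π' i := Function.update_of_ne hq.symm _ _
  rw [hii] at hj ⊢
  -- coalition of i shrinks by one
  have hfilt : (Finset.univ.filter fun k => Function.update π' q j' k = π' i)
      = (Finset.univ.filter fun k => π' k = π' i).erase q := by
    ext k
    by_cases hk : k = q
    · subst hk
      simp [Function.update_self, hj']
    · simp [Function.update_of_ne hk, hk]
  have hqmem : q ∈ (Finset.univ.filter fun k => π' k = π' i) := by
    simp [hq_in]
  have hcoal : coalSize (Function.update π' q j') (π' i) + 1 = coalSize π' (π' i) := by
    unfold coalSize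
    rw [hfilt, Finset.card_erase_of_mem hqmem]
    exact Nat.succ_pred_eq_of_pos (Finset.card_pos.mpr ⟨q, hqmem⟩)
  rw [hcoal]
  have hjoin : joinSize (Function.update π' q j') i j = coalSize (Function.update π' q j') j + 1 := by
    unfold joinSize
    rw [hii, if_neg (Ne.symm hj)]
  rw [hjoin]
  by_cases hjj : j = j'
  · -- j = j' : coalition grew by one
    subst hjj
    have hfilt' : (Finset.univ.filter fun k => Function.update π' q j k = j)
        = insert q (Finset.univ.filter fun k => π' k = j) := by
      ext k
      by_cases hk : k = q
      · subst hk; simp [Function.update_self]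
      · simp [Function.update_of_ne hk, hk]
    have hqnot : q ∉ (Finset.univ.filter fun k => π' k = j) := by
      simp [hq_in, Ne.symm hj]
    have hc : coalSize (Function.update π' q j) j = coalSize π' j + 1 := by
      unfold coalSize
      rw [hfilt', Finset.card_insert_of_notMem hqnot]
    rw [hc]
    have h1 := hbest j
    have hjoin' : joinSize π' i j = coalSize π' j + 1 := by
      unfold joinSize
      rw [if_neg (fun h => hj h.symm)]
    rw [hjoin'] at h1
    exact htrans i h1 (hSPAO i j _ _ (Nat.lt_succ_self _))
  · -- j ≠ j' : coalition unchanged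
    have hfilt' : (Finset.univ.filter fun k => Function.update π' q j' k = j)
        = (Finset.univ.filter fun k => π' k = j) := by
      ext k
      by_cases hk : k = q
      · subst hk
        simp [Function.update_self, Ne.symm hjj, hq_in, Ne.symm hj]
      · simp [Function.update_of_ne hk]
    have hc : coalSize (Function.update π' q j') j = coalSize π' j := by
      unfold coalSize; rw [hfilt']
    rw [hc]
    have h1 := hbest j
    have hjoin' : joinSize π' i j = coalSize π' j + 1 := by
      unfold joinSize
      rw [if_neg (Ne.symm hj)]
    rwa [hjoin'] at h1
end

section
/- Given a Nash stable partition Π of a GRAPE instance with individual utilities u_i(t_j, p) ∈ ℝ, let J_GRAPE = Σ_i u_i(t_{Π(i)}, |S_{Π(i)}|) and J_OPT the maximal global utility over all partitions. Define λ = Σ_{S_j ∈ Π} max_{a_i ∈ A, 1 ≤ p ≤ |A|} p·(u_i(t_j, p) − u_i(t_j, |S_j ∪ {a_i}|)). Then J_GRAPE ≥ J_OPT − λ; equivalently, if J_GRAPE > 0, the suboptimality ratio J_GRAPE/J_OPT is at least J_GRAPE/(J_GRAPE + λ). -/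
/-- Global utility of a partition. -/
noncomputable def globalUtil {A τ : Type*} [Fintype A] [DecidableEq τ]
    (u : A → τ → ℕ → ℝ) (π : A → τ) : ℝ :=
  ∑ i : A, u i (π i) (coalSize π (π i))

/-- Optimal global utility over all partitions. -/
noncomputable def optUtil {A τ : Type*} [Fintype A] [DecidableEq τ]
    (u : A → τ → ℕ → ℝ) : ℝ :=
  sSup {v : ℝ | ∃ π : A → τ, v = globalUtil u π}

/-- The slack `λ` of Theorem 3:
`λ = Σ_{S_j ∈ Π} max_{a_i ∈ A, 1 ≤ p ≤ |A|} p (u_i(t_j, p) − u_i(t_j, |S_j ∪ {a_i}|))`. -/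
noncomputable def lamGRAPE {A τ : Type*} [Fintype A] [Fintype τ] [DecidableEq τ]
    (u : A → τ → ℕ → ℝ) (π : A → τ) : ℝ :=
  ∑ j : τ, sSup {x : ℝ | ∃ (i : A) (p : ℕ), 1 ≤ p ∧ p ≤ Fintype.card A ∧
    x = (p : ℝ) * (u i j p - u i j (joinSize π i j))}

section Aux

variable {A τ : Type*} [Fintype A] [Nonempty A] [Fintype τ] [DecidableEq τ]

/-- The per-task slack set. -/
def slackSet (u : A → τ → ℕ → ℝ) (π : A → τ) (j : τ) : Set ℝ :=
  {x : ℝ | ∃ (i : A) (p : ℕ), 1 ≤ p ∧ p ≤ Fintype.card A ∧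
    x = (p : ℝ) * (u i j p - u i j (joinSize π i j))}

lemma joinSize_pos (π : A → τ) (i : A) (j : τ) : 1 ≤ joinSize π i j := by
  unfold joinSize
  split
  · rename_i h
    have hm : i ∈ Finset.univ.filter fun k => π k = j :=
      Finset.mem_filter.mpr ⟨Finset.mem_univ i, h⟩
    exact Finset.card_pos.mpr ⟨i, hm⟩
  · omega

lemma joinSize_le (π : A → τ) (i : A) (j : τ) : joinSize π i j ≤ Fintype.card A := by
  classical
  unfold joinSize
  split
  · exact Finset.card_le_univ _
  · rename_i h
    have hsub : (Finset.univ.filter fun k => π k = j) ⊆ Finset.univ.erase i := by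
      intro k hk
      simp only [Finset.mem_filter] at hk
      refine Finset.mem_erase.mpr ⟨?_, Finset.mem_univ k⟩
      rintro rfl; exact h hk.2
    have := Finset.card_le_card hsub
    rw [Finset.card_erase_of_mem (Finset.mem_univ i)] at this
    have hcard : 1 ≤ Fintype.card A := Fintype.card_pos
    unfold coalSize
    simp only [Finset.card_univ] at this
    omega

lemma slackSet_bddAbove (u : A → τ → ℕ → ℝ) (π : A → τ) (j : τ) :
    BddAbove (slackSet u π j) := by
  have hfin : (slackSet u π j).Finite := by
    apply Set.Finite.subset (Set.finite_range
      (fun ip : A × Finset.Icc 1 (Fintype.card A) =>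
        ((ip.2 : ℕ) : ℝ) * (u ip.1 j ip.2 - u ip.1 j (joinSize π ip.1 j))))
    rintro x ⟨i, p, hp1, hp2, rfl⟩
    exact ⟨(i, ⟨p, Finset.mem_Icc.mpr ⟨hp1, hp2⟩⟩), rfl⟩
  exact hfin.bddAbove

lemma slackSet_zero_mem (u : A → τ → ℕ → ℝ) (π : A → τ) (j : τ) :
    (0 : ℝ) ∈ slackSet u π j := by
  obtain ⟨i⟩ := ‹Nonempty A›
  exact ⟨i, joinSize π i j, joinSize_pos π i j, joinSize_le π i j, by ring⟩

lemma slackSet_sSup_nonneg (u : A → τ → ℕ → ℝ) (π : A → τ) (j : τ) :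
    0 ≤ sSup (slackSet u π j) :=
  le_csSup (slackSet_bddAbove u π j) (slackSet_zero_mem u π j)

/-- Key lemma: any partition's global utility is at most `J_GRAPE + λ`. -/
lemma globalUtil_le (u : A → τ → ℕ → ℝ) (π : A → τ)
    (hNash : ∀ (i : A) (j : τ),
      u i (π i) (coalSize π (π i)) ≥ u i j (joinSize π i j)) (σ : A → τ) :
    globalUtil u σ ≤ globalUtil u π + lamGRAPE u π := by
  have hsplit : globalUtil u σ =
      (∑ i : A, (u i (σ i) (coalSize σ (σ i)) - u i (σ i) (joinSize π i (σ i))))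
        + ∑ i : A, u i (σ i) (joinSize π i (σ i)) := by
    rw [← Finset.sum_add_distrib]
    simp [globalUtil]
  rw [hsplit]
  have h2 : ∑ i : A, u i (σ i) (joinSize π i (σ i)) ≤ globalUtil u π :=
    Finset.sum_le_sum fun i _ => hNash i (σ i)
  have h1 : (∑ i : A, (u i (σ i) (coalSize σ (σ i)) - u i (σ i) (joinSize π i (σ i))))
      ≤ lamGRAPE u π := by
    have hfib : (∑ i : A, (u i (σ i) (coalSize σ (σ i)) - u i (σ i) (joinSize π i (σ i))))
        = ∑ j : τ, ∑ i ∈ Finset.univ.filter fun i => σ i = j,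
            (u i (σ i) (coalSize σ (σ i)) - u i (σ i) (joinSize π i (σ i))) := by
      rw [Finset.sum_fiberwise_of_maps_to (fun i _ => Finset.mem_univ (σ i))]
    rw [hfib]
    unfold lamGRAPE
    apply Finset.sum_le_sum
    intro j _
    set F := Finset.univ.filter fun i => σ i = j with hF
    set M := sSup (slackSet u π j) with hM
    show ∑ i ∈ F, _ ≤ sSup _
    rcases F.eq_empty_or_nonempty with hFe | hFne
    · rw [hFe, Finset.sum_empty]
      exact slackSet_sSup_nonneg u π j
    · have hn : 0 < F.card := Finset.card_pos.mpr hFne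
      have hle : ∀ i ∈ F,
          u i (σ i) (coalSize σ (σ i)) - u i (σ i) (joinSize π i (σ i)) ≤ M / F.card := by
        intro i hi
        have hσi : σ i = j := (Finset.mem_filter.mp hi).2
        have hcs : coalSize σ j = F.card := rfl
        have hmem : (F.card : ℝ) *
            (u i j (F.card) - u i j (joinSize π i j)) ∈ slackSet u π j := by
          exact ⟨i, F.card, hn, Finset.card_le_univ F, rfl⟩
        have hle' := le_csSup (slackSet_bddAbove u π j) hmem
        rw [hσi, hcs]
        rw [hcs] at *
        rw [le_div_iff₀ (by positivity : (0:ℝ) < F.card)]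
        calc (u i j F.card - u i j (joinSize π i j)) * F.card
            = (F.card : ℝ) * (u i j F.card - u i j (joinSize π i j)) := by ring
          _ ≤ M := hle'
      calc ∑ i ∈ F, (u i (σ i) (coalSize σ (σ i)) - u i (σ i) (joinSize π i (σ i)))
          ≤ F.card • (M / F.card) := Finset.sum_le_card_nsmul F _ _ hle
        _ = M := by
            rw [nsmul_eq_mul]
            field_simp
  linarith

end Aux

/-- For a Nash stable partition `π`, `J_GRAPE ≥ J_OPT − λ`; equivalently,
if `J_GRAPE > 0` then the suboptimality ratio satisfies
`J_GRAPE / J_OPT ≥ J_GRAPE / (J_GRAPE + λ)`. -/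
theorem suboptimality_lower_bound_general
    {A τ : Type*} [Fintype A] [Nonempty A] [Fintype τ] [DecidableEq τ] [Nonempty τ]
    (u : A → τ → ℕ → ℝ) (π : A → τ)
    (hNash : ∀ (i : A) (j : τ),
      u i (π i) (coalSize π (π i)) ≥ u i j (joinSize π i j)) :
    globalUtil u π ≥ optUtil u - lamGRAPE u π ∧
    (0 < globalUtil u π →
      globalUtil u π / optUtil u ≥
        globalUtil u π / (globalUtil u π + lamGRAPE u π)) := by
  have hopt_le : optUtil u ≤ globalUtil u π + lamGRAPE u π := by
    refine csSup_le ⟨globalUtil u π, π, rfl⟩ ?_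
    rintro v ⟨σ, rfl⟩
    exact globalUtil_le u π hNash σ
  have hbdd : BddAbove {v : ℝ | ∃ σ : A → τ, v = globalUtil u σ} := by
    have hfin : {v : ℝ | ∃ σ : A → τ, v = globalUtil u σ}.Finite := by
      apply Set.Finite.subset (Set.finite_range (fun σ : A → τ => globalUtil u σ))
      rintro v ⟨σ, rfl⟩; exact ⟨σ, rfl⟩
    exact hfin.bddAbove
  have hJ_le_opt : globalUtil u π ≤ optUtil u :=
    le_csSup hbdd ⟨π, rfl⟩
  refine ⟨by linarith, fun hJ => ?_⟩
  have hopt_pos : 0 < optUtil u := lt_of_lt_of_le hJ hJ_le_opt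
  exact div_le_div_of_nonneg_left hJ.le hopt_pos hopt_le
end

section
/- Let Π^A and Π^B be two partitions of the agent set into task-indexed coalitions, and define the merged multi-assignment Π^A ⊕ Π^B whose coalition for task t_j is S_j^A ∪ S_j^B (agents appearing in both counted twice). If the social utility of every coalition is non-decreasing in its size, then V(Π^A) ≤ V(Π^A ⊕ Π^B), where V sums each (possibly duplicated) agent's utility u_i(t_j, size of merged coalition for t_j) over its memberships. -/
lemma aux_grow {A τ : Type*} (u : A → τ → ℕ → ℝ)
    (hsocial : ∀ (j : τ) (S : Multiset A) (l : A),
      ((S.map fun i => u i j (Multiset.card S)).sum) ≤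
        (((l ::ₘ S).map fun i => u i j (Multiset.card S + 1)).sum))
    (j : τ) (S T : Multiset A) :
    (S.map fun i => u i j (Multiset.card S)).sum ≤
      ((S + T).map fun i => u i j (Multiset.card S + Multiset.card T)).sum := by
  induction T using Multiset.induction with
  | empty => simp
  | cons l T ih =>
    calc (S.map fun i => u i j (Multiset.card S)).sum
        ≤ ((S + T).map fun i => u i j (Multiset.card (S + T))).sum := by
          simpa using ih
      _ ≤ ((l ::ₘ (S + T)).map fun i => u i j (Multiset.card (S + T) + 1)).sum :=
          hsocial j (S + T) l
      _ = ((S + l ::ₘ T).map fun i => u i j (Multiset.card S + Multiset.card (l ::ₘ T))).sum := by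
          rw [show l ::ₘ (S + T) = S + l ::ₘ T by
            simp [Multiset.cons_swap, Multiset.cons_add, Multiset.add_cons]]
          simp [Multiset.card_cons, Multiset.card_add]
          ring_nf

/-- Let `πA`, `πB` be two partitions of the agent set into task-indexed
coalitions, and let the merged multi-assignment `πA ⊕ πB` have, for task `j`, the coalition
`S_j^A ∪ S_j^B` with agents in both counted twice (size `|S_j^A| + |S_j^B|`).  If the social
utility of every coalition (viewed as a multiset of agents) is non-decreasing in its size,
then `V(πA) ≤ V(πA ⊕ πB)`, where `V` of the merged assignment sums each (possibly
duplicated) agent's utility at the merged coalition size over its memberships. -/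
theorem merged_partition_social_utility
    {A τ : Type*} [Fintype A] [DecidableEq τ]
    (u : A → τ → ℕ → ℝ)
    (hsocial : ∀ (j : τ) (S : Multiset A) (l : A),
      ((S.map fun i => u i j (Multiset.card S)).sum) ≤
        (((l ::ₘ S).map fun i => u i j (Multiset.card S + 1)).sum))
    (πA πB : A → τ) :
    (∑ i : A, u i (πA i) (coalSize πA (πA i)))
      ≤ (∑ i : A, u i (πA i) (coalSize πA (πA i) + coalSize πB (πA i)))
        + (∑ i : A, u i (πB i) (coalSize πA (πB i) + coalSize πB (πB i))) := by
  classical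
  set J : Finset τ := (Finset.univ.image πA) ∪ (Finset.univ.image πB) with hJ
  have hA : ∀ i : A, πA i ∈ J := fun i => by
    simp [hJ, Finset.mem_union, Finset.mem_image]
  have hB : ∀ i : A, πB i ∈ J := fun i => by
    simp [hJ, Finset.mem_union, Finset.mem_image]
  -- fiberwise decompositions
  have e1 : (∑ i : A, u i (πA i) (coalSize πA (πA i)))
      = ∑ j ∈ J, ∑ i ∈ Finset.univ.filter (fun i => πA i = j),
          u i j (coalSize πA j) := by
    rw [← Finset.sum_fiberwise_of_maps_to (fun i _ => hA i)
      (fun i => u i (πA i) (coalSize πA (πA i)))]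
    refine Finset.sum_congr rfl fun j _ => Finset.sum_congr rfl fun i hi => ?_
    rw [(Finset.mem_filter.mp hi).2]
  have e2 : (∑ i : A, u i (πA i) (coalSize πA (πA i) + coalSize πB (πA i)))
      = ∑ j ∈ J, ∑ i ∈ Finset.univ.filter (fun i => πA i = j),
          u i j (coalSize πA j + coalSize πB j) := by
    rw [← Finset.sum_fiberwise_of_maps_to (fun i _ => hA i)
      (fun i => u i (πA i) (coalSize πA (πA i) + coalSize πB (πA i)))]
    refine Finset.sum_congr rfl fun j _ => Finset.sum_congr rfl fun i hi => ?_
    rw [(Finset.mem_filter.mp hi).2]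
  have e3 : (∑ i : A, u i (πB i) (coalSize πA (πB i) + coalSize πB (πB i)))
      = ∑ j ∈ J, ∑ i ∈ Finset.univ.filter (fun i => πB i = j),
          u i j (coalSize πA j + coalSize πB j) := by
    rw [← Finset.sum_fiberwise_of_maps_to (fun i _ => hB i)
      (fun i => u i (πB i) (coalSize πA (πB i) + coalSize πB (πB i)))]
    refine Finset.sum_congr rfl fun j _ => Finset.sum_congr rfl fun i hi => ?_
    rw [(Finset.mem_filter.mp hi).2]
  rw [e1, e2, e3, ← Finset.sum_add_distrib]
  apply Finset.sum_le_sum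
  intro j _
  have key := aux_grow u hsocial j
    (Finset.univ.filter (fun i => πA i = j)).val
    (Finset.univ.filter (fun i => πB i = j)).val
  have hcA : Multiset.card (Finset.univ.filter (fun i => πA i = j)).val = coalSize πA j := rfl
  have hcB : Multiset.card (Finset.univ.filter (fun i => πB i = j)).val = coalSize πB j := rfl
  rw [hcA, hcB, Multiset.map_add, Multiset.sum_add] at key
  exact key
end

section
/- Let u_i and ũ_i be two utility systems with ũ_i(t_j,p) ≥ u_i(t_j,p) for all i, j, p. Let Π be a Nash stable partition under ũ with global utilities J̃ = Σ_i ũ_i(...) and J = Σ_i u_i(...) under Π, and let δ = J̃ − J ≥ 0. If under ũ the suboptimality bound J̃/J̃_OPT ≥ J̃/(J̃ + λ̃) holds (with λ̃ the suboptimality slack of Theorem 3 computed with ũ), then the suboptimality under the original utilities satisfies J/J_OPT ≥ (J/(J + λ̃)) · (J/(J + δ)), assuming J > 0. -/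
lemma joinSize_one_le {A τ : Type*} [Fintype A] [DecidableEq τ] (π : A → τ) (i : A) (j : τ) :
    1 ≤ joinSize π i j := by
  unfold joinSize coalSize
  split
  · rename_i h
    refine Finset.card_pos.mpr ⟨i, ?_⟩
    simp [h]
  · omega

lemma joinSize_le_card {A τ : Type*} [Fintype A] [DecidableEq A] [DecidableEq τ] (π : A → τ) (i : A) (j : τ) :
    joinSize π i j ≤ Fintype.card A := by
  unfold joinSize coalSize
  split
  · exact le_trans (Finset.card_filter_le _ _) (le_of_eq rfl)
  · rename_i h
    have hsub : (Finset.univ.filter fun k => π k = j) ⊆ Finset.univ.erase i := by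
      intro k hk
      simp only [Finset.mem_filter, Finset.mem_univ, true_and] at hk
      refine Finset.mem_erase.mpr ⟨?_, Finset.mem_univ k⟩
      rintro rfl; exact h hk
    have h1 := Finset.card_le_card hsub
    have h2 : (Finset.univ.erase i).card = Fintype.card A - 1 := by
      rw [Finset.card_erase_of_mem (Finset.mem_univ i), Finset.card_univ]
    have h3 : 1 ≤ Fintype.card A := Fintype.card_pos_iff.mpr ⟨i⟩
    omega

/-- Utility systems `u ≤ ũ` pointwise; `π` Nash stable under `ũ`;
`J̃ = globalUtil ũ π`, `J = globalUtil u π`, `δ = J̃ − J`.  If the suboptimality bound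
`J̃/J̃_OPT ≥ J̃/(J̃ + λ̃)` holds (with `λ̃` computed with `ũ`), then
`J/J_OPT ≥ (J/(J + λ̃)) · (J/(J + δ))`, assuming `J > 0`. -/
theorem suboptimality_auxiliary_utilities
    {A τ : Type*} [Fintype A] [Nonempty A] [Fintype τ] [DecidableEq τ] [Nonempty τ]
    (u ut : A → τ → ℕ → ℝ)
    (hnonneg : ∀ (i : A) (j : τ) (p : ℕ), 0 ≤ u i j p)
    (hpt : ∀ (i : A) (j : τ) (p : ℕ), u i j p ≤ ut i j p)
    (π : A → τ)
    (hNash : ∀ (i : A) (j : τ),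
      ut i (π i) (coalSize π (π i)) ≥ ut i j (joinSize π i j))
    (hbound : globalUtil ut π / optUtil ut ≥
      globalUtil ut π / (globalUtil ut π + lamGRAPE ut π))
    (hJ : 0 < globalUtil u π) :
    globalUtil u π / optUtil u ≥
      (globalUtil u π / (globalUtil u π + lamGRAPE ut π)) *
      (globalUtil u π / (globalUtil u π + (globalUtil ut π - globalUtil u π))) := by
  classical
  set J := globalUtil u π with hJdef
  set Jt := globalUtil ut π with hJtdef
  set lam := lamGRAPE ut π with hlamdef
  have hJle : J ≤ Jt := Finset.sum_le_sum fun i _ => hpt _ _ _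
  have hJtpos : 0 < Jt := lt_of_lt_of_le hJ hJle
  -- finiteness of the sets defining optUtil
  have hfin : ∀ w : A → τ → ℕ → ℝ, ({v : ℝ | ∃ π' : A → τ, v = globalUtil w π'}).Finite := by
    intro w
    apply Set.Finite.subset (Set.finite_range (globalUtil w))
    rintro v ⟨π', rfl⟩
    exact ⟨π', rfl⟩
  have hmemu : J ∈ {v : ℝ | ∃ π' : A → τ, v = globalUtil u π'} := ⟨π, rfl⟩
  have hmemt : Jt ∈ {v : ℝ | ∃ π' : A → τ, v = globalUtil ut π'} := ⟨π, rfl⟩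
  have hoptu_ge : J ≤ optUtil u := le_csSup (hfin u).bddAbove hmemu
  have hoptu_pos : 0 < optUtil u := lt_of_lt_of_le hJ hoptu_ge
  have hoptt_ge : Jt ≤ optUtil ut := le_csSup (hfin ut).bddAbove hmemt
  have hoptt_pos : 0 < optUtil ut := lt_of_lt_of_le hJtpos hoptt_ge
  have hopt_le : optUtil u ≤ optUtil ut := by
    apply csSup_le ⟨J, hmemu⟩
    rintro v ⟨π', rfl⟩
    refine le_trans (Finset.sum_le_sum fun i _ => hpt _ _ _) ?_
    exact le_csSup (hfin ut).bddAbove ⟨π', rfl⟩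
  -- λ̃ ≥ 0
  have hlam : 0 ≤ lam := by
    rw [hlamdef, lamGRAPE]
    apply Finset.sum_nonneg
    intro j _
    have hbdd : BddAbove {x : ℝ | ∃ (i : A) (p : ℕ), 1 ≤ p ∧ p ≤ Fintype.card A ∧
        x = (p : ℝ) * (ut i j p - ut i j (joinSize π i j))} := by
      apply Set.Finite.bddAbove
      apply Set.Finite.subset (Set.finite_range
        (fun q : A × Fin (Fintype.card A + 1) =>
          ((q.2 : ℕ) : ℝ) * (ut q.1 j q.2 - ut q.1 j (joinSize π q.1 j))))
      rintro x ⟨i, p, _, h2, rfl⟩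
      exact ⟨⟨i, ⟨p, Nat.lt_succ_of_le h2⟩⟩, rfl⟩
    obtain ⟨i⟩ := ‹Nonempty A›
    have hmem : (0 : ℝ) ∈ {x : ℝ | ∃ (i : A) (p : ℕ), 1 ≤ p ∧ p ≤ Fintype.card A ∧
        x = (p : ℝ) * (ut i j p - ut i j (joinSize π i j))} :=
      ⟨i, joinSize π i j, joinSize_one_le π i j, joinSize_le_card π i j, by ring⟩
    exact le_csSup hbdd hmem
  have hden : 0 < Jt + lam := by linarith
  -- from hbound: optUtil ut ≤ Jt + lam
  have h1 : optUtil ut ≤ Jt + lam :=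
    (div_le_div_iff_of_pos_left hJtpos hden hoptt_pos).mp hbound
  have hrw : J + (Jt - J) = Jt := by ring
  rw [hrw, ge_iff_le, div_mul_div_comm, div_le_div_iff₀ (by positivity) hoptu_pos]
  have hJopt : optUtil u ≤ Jt + lam := le_trans hopt_le h1
  have h2 : J * optUtil u ≤ J * (Jt + lam) :=
    mul_le_mul_of_nonneg_left hJopt hJ.le
  have h3 : lam * J ≤ lam * Jt := mul_le_mul_of_nonneg_left hJle hlam
  have h4 : J * optUtil u ≤ (J + lam) * Jt := by nlinarith
  nlinarith [mul_le_mul_of_nonneg_left h4 hJ.le]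
end

section
/- In a SPAO GRAPE instance, if partition Π is Nash stable and an agent a_q is removed from the instance (its coalition loses one member), then the only agents who can have a strictly improving unilateral deviation in the resulting partition are agents currently assigned to coalitions other than the one a_q left, and any such deviation must be into the coalition that a_q left. -/
def SPrefers {A τ : Type*} (R : A → τ × ℕ → τ × ℕ → Prop) (i : A) (x y : τ × ℕ) : Prop :=
  R i x y ∧ ¬ R i y x

/-- Coalition sizes after agent `q` is removed from the instance. -/
def remSize {A τ : Type*} [Fintype A] [DecidableEq A] [DecidableEq τ]
    (π : A → τ) (q : A) (j : τ) : ℕ :=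
  (Finset.univ.filter fun k => k ≠ q ∧ π k = j).card


lemma remSize_eq_of_ne {A τ : Type*} [Fintype A] [DecidableEq A] [DecidableEq τ]
    (π : A → τ) (q : A) (j : τ) (h : π q ≠ j) : remSize π q j = coalSize π j := by
  unfold remSize coalSize
  congr 1
  apply Finset.filter_congr
  intro k _
  constructor
  · rintro ⟨_, hk⟩; exact hk
  · intro hk; exact ⟨fun e => h (e ▸ hk), hk⟩

lemma coalSize_eq_remSize_succ {A τ : Type*} [Fintype A] [DecidableEq A] [DecidableEq τ]
    (π : A → τ) (q : A) : coalSize π (π q) = remSize π q (π q) + 1 := by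
  unfold remSize coalSize
  have : (Finset.univ.filter fun k => π k = π q)
      = insert q (Finset.univ.filter fun k => k ≠ q ∧ π k = π q) := by
    ext k
    simp only [Finset.mem_filter, Finset.mem_univ, true_and, Finset.mem_insert]
    by_cases hk : k = q
    · subst hk; simp
    · simp [hk]
  rw [this, Finset.card_insert_of_notMem (by simp)]

/-- If `π` is Nash stable and agent `q` is removed, then any remaining
agent `i` with a strictly improving unilateral deviation to `j` in the resulting partition
must belong to a coalition other than the one `q` left, and must deviate into the coalition
`q` left: `π i ≠ π q` and `j = π q`. -/
theorem removal_deviations_into_vacated_coalition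
    {A τ : Type*} [Fintype A] [DecidableEq A] [Fintype τ] [DecidableEq τ]
    (R : A → τ × ℕ → τ × ℕ → Prop)
    (htotal : ∀ i x y, R i x y ∨ R i y x)
    (htrans : ∀ i, Transitive (R i))
    (hSPAO : ∀ (i : A) (t : τ) (p1 p2 : ℕ), p1 < p2 → R i (t, p1) (t, p2))
    (π : A → τ)
    (hNash : ∀ (i : A) (j : τ), R i (π i, coalSize π (π i)) (j, joinSize π i j))
    (q : A) :
    ∀ (i : A), i ≠ q → ∀ j : τ, j ≠ π i →
      SPrefers R i (j, remSize π q j + 1) (π i, remSize π q (π i)) →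
      π i ≠ π q ∧ j = π q := by
  intro i hiq j hj hS
  obtain ⟨h1, h2⟩ := hS
  by_cases hpi : π i = π q
  · -- i is in q's coalition: contradiction
    exfalso
    have hjq : π q ≠ j := fun e => hj (e ▸ hpi).symm
    have hrj : remSize π q j = coalSize π j := remSize_eq_of_ne π q j hjq
    have hri : coalSize π (π i) = remSize π q (π i) + 1 := by
      rw [hpi]; exact coalSize_eq_remSize_succ π q
    have hNash' : R i (π i, coalSize π (π i)) (j, coalSize π j + 1) := by
      have := hNash i j
      rwa [joinSize, if_neg (fun e => hj e.symm)] at this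
    have hstep : R i (π i, remSize π q (π i)) (π i, coalSize π (π i)) := by
      apply hSPAO; omega
    exact h2 (htrans i hstep (hrj ▸ hNash'))
  · refine ⟨hpi, ?_⟩
    by_contra hjne
    have hrj : remSize π q j = coalSize π j := remSize_eq_of_ne π q j (fun e => hjne e.symm)
    have hri : remSize π q (π i) = coalSize π (π i) :=
      remSize_eq_of_ne π q (π i) (fun e => hpi e.symm)
    have hNash' : R i (π i, coalSize π (π i)) (j, coalSize π j + 1) := by
      have := hNash i j
      rwa [joinSize, if_neg (fun e => hj e.symm)] at this
    exact h2 (hri ▸ hrj ▸ hNash')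
end

section
/- In a SPAO GRAPE instance, if Π is Nash stable and a new task t_{new} with SPAO preferences is added (with all agents initially staying put), then in the resulting enlarged instance any agent that deviates in the greedy process must deviate to the coalition of t_{new}, in the first step of the process; in particular, if no agent strictly prefers (t_{new}, 1) over its current assignment, Π extended with an empty coalition for t_{new} is Nash stable. -/
lemma coalSize_ext {A τ : Type*} [Fintype A] [DecidableEq τ] (π : A → τ) (j : τ) :
    coalSize (fun k => some (π k)) (some j) = coalSize π j := by
  simp [coalSize]

lemma coalSize_ext_none {A τ : Type*} [Fintype A] [DecidableEq τ] (π : A → τ) :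
    coalSize (fun k => some (π k)) (none : Option τ) = 0 := by
  simp [coalSize]

lemma joinSize_ext {A τ : Type*} [Fintype A] [DecidableEq τ] (π : A → τ) (i : A) (j : τ) :
    joinSize (fun k => some (π k)) i (some j) = joinSize π i j := by
  simp [joinSize, coalSize_ext]

lemma joinSize_ext_none {A τ : Type*} [Fintype A] [DecidableEq τ] (π : A → τ) (i : A) :
    joinSize (fun k => some (π k)) i (none : Option τ) = 1 := by
  simp [joinSize, coalSize_ext_none]

/-- Let `π` be Nash stable for tasks `τ` and add a new task (the `none`
element of `Option τ`) with SPAO preferences, its coalition starting empty (all agents stay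
put, giving the extended partition `πe i = some (π i)`).  Then any strictly improving
unilateral deviation in the first step of the greedy process must be into the new task's
coalition; in particular, if no agent strictly prefers `(t_new, 1)` over its current
assignment, the extended partition is Nash stable. -/
theorem new_task_first_deviation
    {A τ : Type*} [Fintype A] [Fintype τ] [DecidableEq τ]
    (R : A → Option τ × ℕ → Option τ × ℕ → Prop)
    (htotal : ∀ i x y, R i x y ∨ R i y x)
    (htrans : ∀ i, Transitive (R i))
    (hSPAO : ∀ (i : A) (t : Option τ) (p1 p2 : ℕ), p1 < p2 → R i (t, p1) (t, p2))
    (π : A → τ)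
    (hNash : ∀ (i : A) (j : τ),
      R i (some (π i), coalSize π (π i)) (some j, joinSize π i j)) :
    (∀ (i : A) (j : Option τ),
      SPrefers R i (j, joinSize (fun k => some (π k)) i j)
        (some (π i), coalSize (fun k => some (π k)) (some (π i))) →
      j = none) ∧
    ((∀ i : A, ¬ SPrefers R i (none, 1) (some (π i), coalSize π (π i))) →
      ∀ (i : A) (j : Option τ),
        R i (some (π i), coalSize (fun k => some (π k)) (some (π i)))
          (j, joinSize (fun k => some (π k)) i j)) := by
  constructor
  · intro i j hpref
    cases j with
    | none => rfl
    | some j' =>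
      exfalso
      rw [joinSize_ext, coalSize_ext] at hpref
      exact hpref.2 (hNash i j')
  · intro h i j
    cases j with
    | none =>
      rw [joinSize_ext_none, coalSize_ext]
      rcases htotal i (some (π i), coalSize π (π i)) ((none : Option τ), 1) with h1 | h1
      · exact h1
      · exact ((not_and_not_right.mp (h i)) h1)
    | some j' =>
      rw [joinSize_ext, coalSize_ext]
      exact hNash i j'
end

section
/- Under equal fair allocation with homogeneous zero-cost agents and strictly positive task rewards r(t_j, p) shared equally (individual utility r(t_j,p)/p), the global utility of a partition equals Σ_j r(t_j, |S_j|)·[|S_j| > 0]; consequently if each r(t_j, ·) is non-decreasing in p, any Nash stable partition's global utility is at least half the maximum of Σ_j r(t_j, |S_j|) over all partitions. -/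
open Finset

namespace EqualSharing

variable {A τ : Type*} [Fintype A] [DecidableEq τ]

lemma coalSize_pos (π : A → τ) (i : A) : 0 < coalSize π (π i) :=
  card_pos.mpr ⟨i, by simp⟩

lemma one_le_joinSize (π : A → τ) (i : A) (j : τ) : 1 ≤ joinSize π i j := by
  unfold joinSize
  split_ifs with h
  · exact h ▸ coalSize_pos π i
  · omega

lemma joinSize_le_coalSize_add_one (π : A → τ) (i : A) (j : τ) :
    joinSize π i j ≤ coalSize π j + 1 := by
  unfold joinSize
  split_ifs <;> omega

lemma sum_fiber_div_coalSize (π : A → τ) {j : τ} (hj : coalSize π j ≠ 0) (x : ℝ) :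
    ∑ _i ∈ univ.filter fun i => π i = j, x / coalSize π j = x := by
  rw [sum_const, nsmul_eq_mul]
  exact mul_div_cancel₀ x (Nat.cast_ne_zero.mpr hj)

lemma sum_div_coalSize [Fintype τ] (π : A → τ) (g : τ → ℝ) :
    ∑ i, g (π i) / coalSize π (π i) = ∑ j ∈ univ.filter fun j => coalSize π j ≠ 0, g j := by
  rw [← sum_fiberwise' univ π fun j => g j / coalSize π j, sum_filter]
  refine sum_congr rfl fun j _ => ?_
  split_ifs with hj
  · exact sum_fiber_div_coalSize π hj (g j)
  · rw [not_not, coalSize, card_eq_zero] at hj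
    rw [hj, sum_empty]

variable (r : τ → ℕ → ℝ)

noncomputable def share (π : A → τ) (i : A) : ℝ :=
  r (π i) (coalSize π (π i)) / coalSize π (π i)

def welfare [Fintype τ] (π : A → τ) : ℝ :=
  ∑ j ∈ univ.filter fun j => coalSize π j ≠ 0, r j (coalSize π j)

def IsNashStable (π : A → τ) : Prop :=
  ∀ i j, r j (joinSize π i j) / joinSize π i j ≤ share r π i

variable {r}

lemma sum_share [Fintype τ] (π : A → τ) : ∑ i, share r π i = welfare r π :=
  sum_div_coalSize π fun j => r j (coalSize π j)

lemma share_nonneg (hpos : ∀ j p, 1 ≤ p → 0 < r j p) (π : A → τ) (i : A) :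
    0 ≤ share r π i :=
  div_nonneg (hpos _ _ (coalSize_pos π i)).le (Nat.cast_nonneg _)

lemma div_le_share_of_coalSize_lt
    (hshare : ∀ j p q, 1 ≤ p → p ≤ q → r j q / (q : ℝ) ≤ r j p / (p : ℝ))
    {π : A → τ} (hNash : IsNashStable r π) (i : A) {j : τ} {q : ℕ} (hq : coalSize π j < q) :
    r j q / q ≤ share r π i :=
  (hshare j _ q (one_le_joinSize π i j)
    ((joinSize_le_coalSize_add_one π i j).trans hq)).trans (hNash i j)

variable [Fintype τ]

lemma sum_le_welfare_of_le_coalSize (hpos : ∀ j p, 1 ≤ p → 0 < r j p)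
    (hmono : ∀ j p q, p ≤ q → r j p ≤ r j q) (π : A → τ) {s : Finset τ} {m : τ → ℕ}
    (hs : ∀ j ∈ s, 0 < m j ∧ m j ≤ coalSize π j) :
    ∑ j ∈ s, r j (m j) ≤ welfare r π := by
  calc ∑ j ∈ s, r j (m j)
      ≤ ∑ j ∈ s, r j (coalSize π j) := sum_le_sum fun j hj => hmono j _ _ (hs j hj).2
    _ ≤ welfare r π := by
      refine sum_le_sum_of_subset_of_nonneg (fun j hj => ?_) fun j hj _ => ?_
      · have := hs j hj
        simp only [mem_filter, mem_univ, true_and]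
        omega
      · exact (hpos j _ (Nat.one_le_iff_ne_zero.mpr (mem_filter.mp hj).2)).le

lemma sum_le_welfare_of_coalSize_lt (hpos : ∀ j p, 1 ≤ p → 0 < r j p)
    (hshare : ∀ j p q, 1 ≤ p → p ≤ q → r j q / (q : ℝ) ≤ r j p / (p : ℝ))
    {π : A → τ} (hNash : IsNashStable r π) (π' : A → τ) {s : Finset τ}
    (hs : ∀ j ∈ s, coalSize π j < coalSize π' j) :
    ∑ j ∈ s, r j (coalSize π' j) ≤ welfare r π := by
  calc ∑ j ∈ s, r j (coalSize π' j)
      = ∑ j ∈ s, ∑ _i ∈ univ.filter fun i => π' i = j, r j (coalSize π' j) / coalSize π' j :=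
        sum_congr rfl fun j hj =>
          (sum_fiber_div_coalSize π' (Nat.ne_zero_of_lt (hs j hj)) _).symm
    _ ≤ ∑ j ∈ s, ∑ i ∈ univ.filter fun i => π' i = j, share r π i :=
      sum_le_sum fun j hj => sum_le_sum fun i _ =>
        div_le_share_of_coalSize_lt hshare hNash i (hs j hj)
    _ ≤ ∑ i, share r π i :=
      sum_fiberwise_le_sum_of_sum_fiber_nonneg fun j _ =>
        sum_nonneg fun i _ => share_nonneg hpos π i
    _ = welfare r π := sum_share π

end EqualSharing

open EqualSharing in
theorem equal_sharing_half_bound_general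
    {A τ : Type*} [Fintype A] [Fintype τ] [DecidableEq τ]
    (r : τ → ℕ → ℝ)
    (hpos : ∀ (j : τ) (p : ℕ), 1 ≤ p → 0 < r j p)
    (hmono : ∀ (j : τ) (p q : ℕ), p ≤ q → r j p ≤ r j q)
    (hshare : ∀ (j : τ) (p q : ℕ), 1 ≤ p → p ≤ q → r j q / (q : ℝ) ≤ r j p / (p : ℝ))
    (π : A → τ)
    (hNash : ∀ (i : A) (j : τ),
      r (π i) (coalSize π (π i)) / (coalSize π (π i) : ℝ)
        ≥ r j (joinSize π i j) / (joinSize π i j : ℝ)) :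
    (∑ i : A, r (π i) (coalSize π (π i)) / (coalSize π (π i) : ℝ))
      = (∑ j ∈ Finset.univ.filter fun j => coalSize π j ≠ 0, r j (coalSize π j)) ∧
    ∀ π' : A → τ,
      (∑ j ∈ Finset.univ.filter fun j => coalSize π' j ≠ 0, r j (coalSize π' j))
        ≤ 2 * ∑ j ∈ Finset.univ.filter fun j => coalSize π j ≠ 0, r j (coalSize π j) := by
  refine ⟨sum_share π, fun π' => ?_⟩
  rw [← sum_filter_add_sum_filter_not _ fun j => coalSize π' j ≤ coalSize π j, two_mul]
  gcongr
  · refine sum_le_welfare_of_le_coalSize hpos hmono π fun j hj => ?_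
    simp only [mem_filter, mem_univ, true_and] at hj
    omega
  · refine sum_le_welfare_of_coalSize_lt hpos hshare hNash π' fun j hj => ?_
    simp only [mem_filter, mem_univ, true_and] at hj
    omega

/-- Equal fair allocation with homogeneous zero-cost agents:
`u_i(t_j, p) = r(t_j, p)/p` with `r(t_j, p) > 0` non-decreasing in `p` and `r(t_j, p)/p`
non-increasing (SPAO).  The global utility of a partition equals
`Σ_{j : S_j ≠ ∅} r(t_j, |S_j|)`; consequently any Nash stable partition's global utility is
at least half the maximum of `Σ_j r(t_j, |S_j|)` over all partitions. -/
theorem equal_sharing_half_bound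
    {A τ : Type*} [Fintype A] [Nonempty A] [Fintype τ] [DecidableEq τ]
    (r : τ → ℕ → ℝ)
    (hpos : ∀ (j : τ) (p : ℕ), 1 ≤ p → 0 < r j p)
    (hmono : ∀ (j : τ) (p q : ℕ), p ≤ q → r j p ≤ r j q)
    (hshare : ∀ (j : τ) (p q : ℕ), 1 ≤ p → p ≤ q → r j q / (q : ℝ) ≤ r j p / (p : ℝ))
    (π : A → τ)
    (hNash : ∀ (i : A) (j : τ),
      r (π i) (coalSize π (π i)) / (coalSize π (π i) : ℝ)
        ≥ r j (joinSize π i j) / (joinSize π i j : ℝ)) :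
    (∑ i : A, r (π i) (coalSize π (π i)) / (coalSize π (π i) : ℝ))
      = (∑ j ∈ Finset.univ.filter fun j => coalSize π j ≠ 0, r j (coalSize π j)) ∧
    ∀ π' : A → τ,
      (∑ j ∈ Finset.univ.filter fun j => coalSize π' j ≠ 0, r j (coalSize π' j))
        ≤ 2 * ∑ j ∈ Finset.univ.filter fun j => coalSize π j ≠ 0, r j (coalSize π j) :=
  equal_sharing_half_bound_general r hpos hmono hshare π hNash
end
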